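/- Fix d_η > 0 and run the OPGA dynamics with step-sizes η^t = d_η/(t+1). Then there exists a constant d_rp > 0 such that ‖r^t − p^t‖₂² ≤ d_rp/t² for all t ≥ 1. -/
import Mathlib


open Real Filter

/-- Deterministic utility u_i(p_i, r_i) = a_i - b_i * p_i + c_i * (r_i - p_i). -/
noncomputable def util (a b c pi ri : ℝ) : ℝ := a - b * pi + c * (ri - pi)

/-- MNL demand of product H. -/
noncomputable def demH (aH aL bH bL cH cL : ℝ) (p r : ℝ × ℝ) : ℝ :=
  Real.exp (util aH bH cH p.1 r.1) /
    (1 + Real.exp (util aH bH cH p.1 r.1) + Real.exp (util aL bL cL p.2 r.2))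

/-- MNL demand of product L. -/
noncomputable def demL (aH aL bH bL cH cL : ℝ) (p r : ℝ × ℝ) : ℝ :=
  Real.exp (util aL bL cL p.2 r.2) /
    (1 + Real.exp (util aH bH cH p.1 r.1) + Real.exp (util aL bL cL p.2 r.2))

/-- Scaled derivative of the log-revenue of firm H. -/
noncomputable def GrH (aH aL bH bL cH cL : ℝ) (p r : ℝ × ℝ) : ℝ :=
  1 / ((bH + cH) * p.1) + demH aH aL bH bL cH cL p r - 1

/-- Scaled derivative of the log-revenue of firm L. -/
noncomputable def GrL (aH aL bH bL cH cL : ℝ) (p r : ℝ × ℝ) : ℝ :=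
  1 / ((bL + cL) * p.2) + demL aH aL bH bL cH cL p r - 1

/-- Stationary Nash equilibrium: positive price vector on which both scaled
derivatives vanish at price = reference price. -/
def IsSNE (aH aL bH bL cH cL : ℝ) (p : ℝ × ℝ) : Prop :=
  0 < p.1 ∧ 0 < p.2 ∧ GrH aH aL bH bL cH cL p p = 0 ∧ GrL aH aL bH bL cH cL p p = 0

/-- Projection onto the interval [lo, hi]. -/
noncomputable def proj (lo hi x : ℝ) : ℝ := min (max x lo) hi

/-- Membership of a price vector in P² = [lo, hi]². -/
def InP2 (lo hi : ℝ) (x : ℝ × ℝ) : Prop := x.1 ∈ Set.Icc lo hi ∧ x.2 ∈ Set.Icc lo hi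

/-- Squared Euclidean norm on ℝ². -/
noncomputable def norm2sq (x : ℝ × ℝ) : ℝ := x.1 ^ 2 + x.2 ^ 2

/-- The OPGA dynamics for price path `pp` and reference-price path `rr`. -/
def OPGA (aH aL bH bL cH cL lo hi alpha : ℝ) (eta : ℕ → ℝ) (pp rr : ℕ → ℝ × ℝ) : Prop :=
  (∀ t, (pp (t+1)).1 =
      proj lo hi ((pp t).1 + eta t * (bH + cH) * GrH aH aL bH bL cH cL (pp t) (rr t))) ∧
  (∀ t, (pp (t+1)).2 =
      proj lo hi ((pp t).2 + eta t * (bL + cL) * GrL aH aL bH bL cH cL (pp t) (rr t))) ∧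
  (∀ t, (rr (t+1)).1 = alpha * (rr t).1 + (1 - alpha) * (pp t).1) ∧
  (∀ t, (rr (t+1)).2 = alpha * (rr t).2 + (1 - alpha) * (pp t).2)

/-- The weighted ℓ¹ distance to the SNE. -/
noncomputable def wdist (bH bL cH cL : ℝ) (pstar p : ℝ × ℝ) : ℝ :=
  |pstar.1 - p.1| / (bH + cH) + |pstar.2 - p.2| / (bL + cL)

/-- The function 𝒢(p) = sign(p_H** − p_H)·G_H(p,p) + sign(p_L** − p_L)·G_L(p,p). -/
noncomputable def calG (aH aL bH bL cH cL : ℝ) (pstar p : ℝ × ℝ) : ℝ :=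
  Real.sign (pstar.1 - p.1) * GrH aH aL bH bL cH cL p p +
  Real.sign (pstar.2 - p.2) * GrL aH aL bH bL cH cL p p

/-- The function ℋ(p) used in the local analysis around the SNE. -/
noncomputable def calH (aH aL bH bL cH cL : ℝ) (pstar p : ℝ × ℝ) : ℝ :=
  (bH + cH) * GrH aH aL bH bL cH cL p p * (pstar.1 - p.1) +
  (bL + cL) * GrL aH aL bH bL cH cL p p * (pstar.2 - p.2)

/-- The constant M_G bounding |G_i| on P². -/
noncomputable def MG (bH bL cH cL lo : ℝ) : ℝ :=
  max (1 / ((bH + cH) * lo)) (1 / ((bL + cL) * lo)) + 1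

/-- The Lipschitz constant l_r = (1/4)·√(c_H² + c_L²). -/
noncomputable def lr (cH cL : ℝ) : ℝ := (1 / 4) * Real.sqrt (cH ^ 2 + cL ^ 2)

lemma proj_mem_Icc (lo hi x : ℝ) (h : lo ≤ hi) : proj lo hi x ∈ Set.Icc lo hi :=
  ⟨le_min (le_max_right _ _) h, min_le_right _ _⟩

lemma proj_dist (lo hi p x : ℝ) (hp1 : lo ≤ p) (hp2 : p ≤ hi) :
    |proj lo hi x - p| ≤ |x - p| := by
  rw [proj]
  rcases le_total x lo with h1 | h1
  · have hlh : lo ≤ hi := le_trans hp1 hp2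
    have heq : min (max x lo) hi = lo := by rw [max_eq_right h1, min_eq_left hlh]
    rw [heq, abs_of_nonpos (by linarith), abs_of_nonpos (by linarith)]
    linarith
  · rcases le_total x hi with h2 | h2
    · rw [max_eq_left h1, min_eq_left h2]
    · have heq : min (max x lo) hi = hi := by rw [max_eq_left h1]; exact min_eq_right h2
      rw [heq, abs_of_nonneg (by linarith), abs_of_nonneg (by linarith)]
      linarith

lemma convex_mem_Icc (lo hi a x y : ℝ) (ha0 : 0 ≤ a) (ha1 : a ≤ 1)
    (hx : x ∈ Set.Icc lo hi) (hy : y ∈ Set.Icc lo hi) :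
    a * x + (1 - a) * y ∈ Set.Icc lo hi := by
  obtain ⟨hx1, hx2⟩ := hx; obtain ⟨hy1, hy2⟩ := hy
  constructor <;> nlinarith

lemma abs_sub_le_width (lo hi x y : ℝ) (hx : x ∈ Set.Icc lo hi) (hy : y ∈ Set.Icc lo hi) :
    |x - y| ≤ hi - lo := by
  obtain ⟨hx1, hx2⟩ := hx; obtain ⟨hy1, hy2⟩ := hy
  rw [abs_le]; constructor <;> linarith

lemma frac_bound (x y : ℝ) (hx : 0 < x) (hy : 0 < y) :
    0 ≤ x / (1 + x + y) ∧ x / (1 + x + y) ≤ 1 := by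
  have hd : 0 < 1 + x + y := by linarith
  refine ⟨by positivity, ?_⟩
  rw [div_le_one hd]; linarith

lemma GrH_bound (aH aL bH bL cH cL lo : ℝ) (p r : ℝ × ℝ)
    (hb : 0 < bH + cH) (hlo : 0 < lo) (hp : lo ≤ p.1) :
    |GrH aH aL bH bL cH cL p r| ≤ 1 / ((bH + cH) * lo) + 1 := by
  have hfrac := frac_bound (Real.exp (util aH bH cH p.1 r.1))
    (Real.exp (util aL bL cL p.2 r.2)) (Real.exp_pos _) (Real.exp_pos _)
  have hd1 : 0 ≤ demH aH aL bH bL cH cL p r := hfrac.1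
  have hd2 : demH aH aL bH bL cH cL p r ≤ 1 := hfrac.2
  have hp0 : 0 < p.1 := lt_of_lt_of_le hlo hp
  have hinv1 : 0 < 1 / ((bH + cH) * p.1) := by positivity
  have hinv2 : 1 / ((bH + cH) * p.1) ≤ 1 / ((bH + cH) * lo) := by
    apply one_div_le_one_div_of_le (by positivity)
    exact mul_le_mul_of_nonneg_left hp hb.le
  rw [GrH, abs_le]
  refine ⟨?_, by linarith⟩
  have : 0 < 1 / ((bH + cH) * lo) := by positivity
  linarith

lemma GrL_bound (aH aL bH bL cH cL lo : ℝ) (p r : ℝ × ℝ)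
    (hb : 0 < bL + cL) (hlo : 0 < lo) (hp : lo ≤ p.2) :
    |GrL aH aL bH bL cH cL p r| ≤ 1 / ((bL + cL) * lo) + 1 := by
  have hd1 : 0 ≤ demL aH aL bH bL cH cL p r := by rw [demL]; positivity
  have hd2 : demL aH aL bH bL cH cL p r ≤ 1 := by
    rw [demL, div_le_one (by positivity)]
    nlinarith [Real.exp_pos (util aH bH cH p.1 r.1)]
  have hp0 : 0 < p.2 := lt_of_lt_of_le hlo hp
  have hinv1 : 0 < 1 / ((bL + cL) * p.2) := by positivity
  have hinv2 : 1 / ((bL + cL) * p.2) ≤ 1 / ((bL + cL) * lo) := by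
    apply one_div_le_one_div_of_le (by positivity)
    exact mul_le_mul_of_nonneg_left hp hb.le
  rw [GrL, abs_le]
  refine ⟨?_, by linarith⟩
  have : 0 < 1 / ((bL + cL) * lo) := by positivity
  linarith

lemma aux_rate (alpha K B : ℝ) (e : ℕ → ℝ) (ha0 : 0 ≤ alpha) (ha1 : alpha < 1)
    (hK : 0 ≤ K) (he0 : ∀ t, 0 ≤ e t) (hB : ∀ t, e t ≤ B)
    (hrec : ∀ t : ℕ, e (t + 1) ≤ alpha * e t + K / ((t : ℝ) + 1)) :
    ∃ D > (0 : ℝ), ∀ t : ℕ, 1 ≤ t → e t ≤ D / t := by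
  have h1a : 0 < 1 - alpha := by linarith
  set N : ℕ := ⌈2 / (1 - alpha)⌉₊ with hNdef
  have hN : (2 / (1 - alpha) : ℝ) ≤ N := Nat.le_ceil _
  have hN2 : (2 : ℝ) ≤ (N : ℝ) := le_trans (by rw [le_div_iff₀ h1a]; nlinarith) hN
  have hB0 : 0 ≤ B := le_trans (he0 0) (hB 0)
  set D : ℝ := max (B * N + 1) (2 * K / (1 - alpha) + 1) with hDdef
  have hD1 : B * N + 1 ≤ D := le_max_left _ _
  have hD2 : 2 * K / (1 - alpha) + 1 ≤ D := le_max_right _ _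
  have hDpos : 0 < D := lt_of_lt_of_le (by positivity) hD1
  refine ⟨D, hDpos, ?_⟩
  intro t
  induction t with
  | zero => intro h; omega
  | succ t ih =>
    intro _
    by_cases hc : t + 1 ≤ N
    · have ht1 : (0 : ℝ) < (t : ℝ) + 1 := by positivity
      rw [Nat.cast_add, Nat.cast_one, le_div_iff₀ ht1]
      have h1 : B * ((t : ℝ) + 1) ≤ B * N := by
        apply mul_le_mul_of_nonneg_left _ hB0
        have : ((t : ℝ) + 1) = ((t + 1 : ℕ) : ℝ) := by push_cast; ring
        rw [this]; exact_mod_cast hc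
      nlinarith [hB (t + 1)]
    · push_neg at hc
      have htN : N ≤ t := by omega
      have hN2' : 2 ≤ N := by exact_mod_cast hN2
      have ht1 : 1 ≤ t := by omega
      have hIH := ih ht1
      have ht0 : (0 : ℝ) < (t : ℝ) := by
        have : (1 : ℕ) ≤ t := ht1; exact_mod_cast this
      have ht10 : (0 : ℝ) < (t : ℝ) + 1 := by positivity
      have htreal : (2 / (1 - alpha) : ℝ) ≤ (t : ℝ) := le_trans hN (by exact_mod_cast htN)
      have hat : 2 ≤ (1 - alpha) * t := by
        rw [div_le_iff₀ h1a] at htreal; linarith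
      have hKD : 2 * K ≤ (1 - alpha) * D := by
        have h : 2 * K / (1 - alpha) ≤ D := by linarith
        rw [div_le_iff₀ h1a] at h; linarith
      have goal' : alpha * D * ((t : ℝ) + 1) + K * t ≤ D * t := by
        nlinarith [mul_le_mul_of_nonneg_right hKD ht0.le,
          mul_le_mul_of_nonneg_right hat hDpos.le, ha0, hDpos.le]
      have key : alpha * (D / t) + K / ((t : ℝ) + 1) ≤ D / ((t : ℝ) + 1) := by
        rw [mul_div_assoc' alpha D, div_add_div _ _ (ne_of_gt ht0) (ne_of_gt ht10),
          div_le_div_iff₀ (by positivity) ht10]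
        nlinarith [mul_le_mul_of_nonneg_right goal' ht10.le]
      calc e (t + 1) ≤ alpha * e t + K / ((t : ℝ) + 1) := hrec t
        _ ≤ alpha * (D / t) + K / ((t : ℝ) + 1) := by
            have := mul_le_mul_of_nonneg_left hIH ha0; linarith
        _ ≤ D / ((t : ℝ) + 1) := key
        _ = D / ((t + 1 : ℕ) : ℝ) := by push_cast; ring

theorem ref_price_gap_rate (aH aL bH bL cH cL : ℝ)
    (hbH : 0 < bH) (hbL : 0 < bL) (hcH : 0 < cH) (hcL : 0 < cL)
    (lo hi : ℝ) (hlo : 0 < lo) (hlohi : lo ≤ hi) (alpha : ℝ) (halpha0 : 0 ≤ alpha) (halpha1 : alpha < 1)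
    (deta : ℝ) (hdeta : 0 < deta)
    (pp rr : ℕ → ℝ × ℝ) (hp0 : InP2 lo hi (pp 0)) (hr0 : InP2 lo hi (rr 0))
    (hdyn : OPGA aH aL bH bL cH cL lo hi alpha (fun t => deta / ((t : ℝ) + 1)) pp rr) :
    ∃ drp > (0 : ℝ), ∀ t : ℕ, 1 ≤ t →
      norm2sq (rr t - pp t) ≤ drp / (t : ℝ) ^ 2 := by
  obtain ⟨hdp1, hdp2, hdr1, hdr2⟩ := hdyn
  have hbHc : 0 < bH + cH := by linarith
  have hbLc : 0 < bL + cL := by linarith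
  -- prices stay in P²
  have hppP : ∀ t, InP2 lo hi (pp t) := by
    intro t
    induction t with
    | zero => exact hp0
    | succ t ih =>
      constructor
      · rw [hdp1 t]; exact proj_mem_Icc lo hi _ hlohi
      · rw [hdp2 t]; exact proj_mem_Icc lo hi _ hlohi
  -- reference prices stay in P²
  have hrrP : ∀ t, InP2 lo hi (rr t) := by
    intro t
    induction t with
    | zero => exact hr0
    | succ t ih =>
      constructor
      · rw [hdr1 t]
        exact convex_mem_Icc lo hi alpha _ _ halpha0 halpha1.le ih.1 (hppP t).1
      · rw [hdr2 t]
        exact convex_mem_Icc lo hi alpha _ _ halpha0 halpha1.le ih.2 (hppP t).2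
  set MH : ℝ := 1 / ((bH + cH) * lo) + 1 with hMHdef
  set ML : ℝ := 1 / ((bL + cL) * lo) + 1 with hMLdef
  have hMH0 : 0 < MH := by rw [hMHdef]; positivity
  have hML0 : 0 < ML := by rw [hMLdef]; positivity
  set KH : ℝ := deta * (bH + cH) * MH with hKHdef
  set KL : ℝ := deta * (bL + cL) * ML with hKLdef
  have hKH0 : 0 ≤ KH := by rw [hKHdef]; positivity
  have hKL0 : 0 ≤ KL := by rw [hKLdef]; positivity
  -- step-size bounds
  have hstep1 : ∀ t : ℕ, |(pp (t + 1)).1 - (pp t).1| ≤ KH / ((t : ℝ) + 1) := by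
    intro t
    have ht1 : (0 : ℝ) < (t : ℝ) + 1 := by positivity
    rw [hdp1 t]
    calc |proj lo hi ((pp t).1 + deta / ((t : ℝ) + 1) * (bH + cH) *
            GrH aH aL bH bL cH cL (pp t) (rr t)) - (pp t).1|
        ≤ |(pp t).1 + deta / ((t : ℝ) + 1) * (bH + cH) *
            GrH aH aL bH bL cH cL (pp t) (rr t) - (pp t).1| :=
          proj_dist lo hi _ _ (hppP t).1.1 (hppP t).1.2
      _ = (deta / ((t : ℝ) + 1) * (bH + cH)) * |GrH aH aL bH bL cH cL (pp t) (rr t)| := by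
          rw [add_sub_cancel_left, abs_mul, abs_of_nonneg (by positivity)]
      _ ≤ (deta / ((t : ℝ) + 1) * (bH + cH)) * MH := by
          apply mul_le_mul_of_nonneg_left _ (by positivity)
          exact GrH_bound aH aL bH bL cH cL lo (pp t) (rr t) hbHc hlo (hppP t).1.1
      _ = KH / ((t : ℝ) + 1) := by rw [hKHdef]; ring
  have hstep2 : ∀ t : ℕ, |(pp (t + 1)).2 - (pp t).2| ≤ KL / ((t : ℝ) + 1) := by
    intro t
    have ht1 : (0 : ℝ) < (t : ℝ) + 1 := by positivity
    rw [hdp2 t]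
    calc |proj lo hi ((pp t).2 + deta / ((t : ℝ) + 1) * (bL + cL) *
            GrL aH aL bH bL cH cL (pp t) (rr t)) - (pp t).2|
        ≤ |(pp t).2 + deta / ((t : ℝ) + 1) * (bL + cL) *
            GrL aH aL bH bL cH cL (pp t) (rr t) - (pp t).2| :=
          proj_dist lo hi _ _ (hppP t).2.1 (hppP t).2.2
      _ = (deta / ((t : ℝ) + 1) * (bL + cL)) * |GrL aH aL bH bL cH cL (pp t) (rr t)| := by
          rw [add_sub_cancel_left, abs_mul, abs_of_nonneg (by positivity)]
      _ ≤ (deta / ((t : ℝ) + 1) * (bL + cL)) * ML := by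
          apply mul_le_mul_of_nonneg_left _ (by positivity)
          exact GrL_bound aH aL bH bL cH cL lo (pp t) (rr t) hbLc hlo (hppP t).2.1
      _ = KL / ((t : ℝ) + 1) := by rw [hKLdef]; ring
  -- per-coordinate error sequences
  set e1 : ℕ → ℝ := fun t => |(rr t).1 - (pp t).1| with he1def
  set e2 : ℕ → ℝ := fun t => |(rr t).2 - (pp t).2| with he2def
  have hrec1 : ∀ t : ℕ, e1 (t + 1) ≤ alpha * e1 t + KH / ((t : ℝ) + 1) := by
    intro t
    have heq : (rr (t + 1)).1 - (pp (t + 1)).1 =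
        alpha * ((rr t).1 - (pp t).1) + ((pp t).1 - (pp (t + 1)).1) := by
      rw [hdr1 t]; ring
    calc e1 (t + 1) = |(rr (t + 1)).1 - (pp (t + 1)).1| := rfl
      _ ≤ |alpha * ((rr t).1 - (pp t).1)| + |(pp t).1 - (pp (t + 1)).1| := by
          rw [heq]; exact abs_add_le _ _
      _ = alpha * e1 t + |(pp (t + 1)).1 - (pp t).1| := by
          rw [abs_mul, abs_of_nonneg halpha0, abs_sub_comm ((pp t).1) ((pp (t + 1)).1)]
      _ ≤ alpha * e1 t + KH / ((t : ℝ) + 1) := by linarith [hstep1 t]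
  have hrec2 : ∀ t : ℕ, e2 (t + 1) ≤ alpha * e2 t + KL / ((t : ℝ) + 1) := by
    intro t
    have heq : (rr (t + 1)).2 - (pp (t + 1)).2 =
        alpha * ((rr t).2 - (pp t).2) + ((pp t).2 - (pp (t + 1)).2) := by
      rw [hdr2 t]; ring
    calc e2 (t + 1) = |(rr (t + 1)).2 - (pp (t + 1)).2| := rfl
      _ ≤ |alpha * ((rr t).2 - (pp t).2)| + |(pp t).2 - (pp (t + 1)).2| := by
          rw [heq]; exact abs_add_le _ _
      _ = alpha * e2 t + |(pp (t + 1)).2 - (pp t).2| := by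
          rw [abs_mul, abs_of_nonneg halpha0, abs_sub_comm ((pp t).2) ((pp (t + 1)).2)]
      _ ≤ alpha * e2 t + KL / ((t : ℝ) + 1) := by linarith [hstep2 t]
  have hb1 : ∀ t, e1 t ≤ hi - lo := fun t =>
    abs_sub_le_width lo hi _ _ (hrrP t).1 (hppP t).1
  have hb2 : ∀ t, e2 t ≤ hi - lo := fun t =>
    abs_sub_le_width lo hi _ _ (hrrP t).2 (hppP t).2
  obtain ⟨D1, hD1pos, hD1⟩ := aux_rate alpha KH (hi - lo) e1 halpha0 halpha1 hKH0
    (fun t => abs_nonneg _) hb1 hrec1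
  obtain ⟨D2, hD2pos, hD2⟩ := aux_rate alpha KL (hi - lo) e2 halpha0 halpha1 hKL0
    (fun t => abs_nonneg _) hb2 hrec2
  refine ⟨D1 ^ 2 + D2 ^ 2, by positivity, ?_⟩
  intro t ht
  have ht0 : (0 : ℝ) < (t : ℝ) := by exact_mod_cast Nat.lt_of_lt_of_le Nat.zero_lt_one ht
  have h1 : e1 t ≤ D1 / t := hD1 t ht
  have h2 : e2 t ≤ D2 / t := hD2 t ht
  have hx1 : ((rr t).1 - (pp t).1) ^ 2 ≤ (D1 / t) ^ 2 := by
    rw [← sq_abs]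
    exact pow_le_pow_left₀ (abs_nonneg _) h1 2
  have hx2 : ((rr t).2 - (pp t).2) ^ 2 ≤ (D2 / t) ^ 2 := by
    rw [← sq_abs]
    exact pow_le_pow_left₀ (abs_nonneg _) h2 2
  have hnorm : norm2sq (rr t - pp t) =
      ((rr t).1 - (pp t).1) ^ 2 + ((rr t).2 - (pp t).2) ^ 2 := by
    simp [norm2sq, Prod.fst_sub, Prod.snd_sub]
  rw [hnorm]
  have : (D1 / (t : ℝ)) ^ 2 + (D2 / (t : ℝ)) ^ 2 = (D1 ^ 2 + D2 ^ 2) / (t : ℝ) ^ 2 := by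
    field_simp
  linarith [hx1, hx2, this.le, this.ge]
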